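/- For p ∈ (1,2), x > 0, and y > 0, the matrix (p(p-1)x^{p-4}/(4y)) · [[2(p-2)(p-3)y², 2(p-2)xy], [2(p-2)xy, x²]] is positive semi-definite. -/

import Mathlib

namespace Matrix

variable {R : Type*} [CommRing R] [LinearOrder R] [IsStrictOrderedRing R] [StarRing R]
  [TrivialStar R]

theorem posSemidef_fin_two_of_sq_le {a b d : R} (ha : 0 ≤ a) (hd : 0 ≤ d)
    (hb : b ^ 2 ≤ a * d) :
    (!![a, b; b, d]).PosSemidef := by
  refine PosSemidef.of_dotProduct_mulVec_nonneg ?_ fun v => ?_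
  · ext i j
    fin_cases i <;> fin_cases j <;> simp
  simp only [star_trivial, dotProduct, mulVec, Fin.sum_univ_two, of_apply, cons_val',
    cons_val_zero, cons_val_one, empty_val', cons_val_fin_one]
  -- `(a + d) Q(v) = (a v₀ + b v₁)² + (b v₀ + d v₁)² + (a d - b²) (v₀² + v₁²)`
  have hsum : 0 ≤ (a + d) * (v 0 * (a * v 0 + b * v 1) + v 1 * (b * v 0 + d * v 1)) := by
    nlinarith [sq_nonneg (a * v 0 + b * v 1), sq_nonneg (b * v 0 + d * v 1),
      mul_nonneg (sub_nonneg.2 hb) (add_nonneg (sq_nonneg (v 0)) (sq_nonneg (v 1)))]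
  rcases (add_nonneg ha hd).eq_or_lt with htrace | htrace
  · obtain ⟨rfl, rfl⟩ : a = 0 ∧ d = 0 := ⟨by linarith, by linarith⟩
    obtain rfl : b = 0 := by simpa using hb
    simp
  · exact nonneg_of_mul_nonneg_right (by linarith) htrace

end Matrix

theorem stmt_7 (p x y : ℝ) (hp : p ∈ Set.Ioo (1 : ℝ) 2) (hx : 0 < x) (hy : 0 < y) :
    Matrix.PosSemidef
      ((p * (p - 1) * x ^ (p - 4) / (4 * y)) •
        !![2 * (p - 2) * (p - 3) * y ^ 2, 2 * (p - 2) * x * y;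
           2 * (p - 2) * x * y, x ^ 2]) := by
  obtain ⟨hp1, hp2⟩ := hp
  have hscalar : 0 ≤ p * (p - 1) * x ^ (p - 4) / (4 * y) := by
    have : 0 < p - 1 := by linarith
    positivity
  refine Matrix.PosSemidef.smul (Matrix.posSemidef_fin_two_of_sq_le ?_ (sq_nonneg x) ?_) hscalar
  · have : 0 ≤ (2 - p) * (3 - p) := mul_nonneg (by linarith) (by linarith)
    nlinarith [sq_nonneg y]
  · -- `a d - b² = 2 (2 - p) (p - 1) x² y²`
    have : 0 ≤ (2 - p) * (p - 1) := mul_nonneg (by linarith) (by linarith)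
    nlinarith [mul_nonneg this (sq_nonneg (x * y))]
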